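/- arXiv:2409.10261 — 2 statements merged into one kernel-verified Lean document; each statement's English description precedes it below -/
import Mathlib

section
/- Let G be a chordal graph with minimum degree k and let p be a nonnegative integer with p < k. Then G contains a chordal spanning subgraph with minimum degree exactly p. -/
open scoped Classical

/-- A graph is chordal if every cycle of length greater than three has a chord, i.e.,
an edge joining two vertices of the cycle that is not itself an edge of the cycle. -/
def SimpleGraph.IsChordal {V : Type*} (G : SimpleGraph V) : Prop :=
  ∀ ⦃v : V⦄ (w : G.Walk v v), w.IsCycle → 3 < w.length →
    ∃ a b : V, G.Adj a b ∧ a ∈ w.support ∧ b ∈ w.support ∧ s(a, b) ∉ w.edges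

/-!
A chordal graph has a simplicial vertex `v` (Dirac), and deleting an edge `uv` keeps it chordal:
a cycle of length at least four through `v` has the chord joining the two neighbours of `v` on it.
Such a deletion lowers the minimum degree by at most one, so deleting edges at simplicial vertices
one at a time reaches minimum degree exactly `p`.

Dirac's lemma, in the form "a clique missing some vertex misses a simplicial vertex", follows by
induction on the number of vertices from the fact that a minimum `a`-`b` separator `S` of a chordal
graph is a clique: for non-adjacent `x, y ∈ S`, shortest `x`-`y` paths through the two sides
of `S` would form a chordless cycle of length at least four.
-/

namespace SimpleGraph

variable {V : Type*} {G : SimpleGraph V} {u v : V}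

namespace Walk

lemma IsCycle.snd_penultimate_notMem_edges {p : G.Walk u u} (hp : p.IsCycle)
    (hl : 3 < p.length) : s(p.snd, p.penultimate) ∉ p.edges := by
  have hnil := hp.not_nil
  have hedges : p.edges = s(u, p.snd) :: p.tail.edges :=
    (congrArg edges (p.cons_tail_eq hnil)).symm.trans (edges_cons _ _)
  rw [hedges, List.mem_cons, not_or]
  constructor
  · rw [Sym2.eq_swap, Sym2.congr_left]
    exact (p.adj_penultimate hnil).ne
  · intro h
    have h2 : p.getVert (p.length - 1) = p.getVert 2 := by
      simpa using hp.isPath_tail.eq_snd_of_mem_edges h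
    have := hp.getVert_injOn (by simp; omega) (by simp; omega) h2
    omega

lemma exists_length_lt_of_isChord {c d : V} (p : G.Walk u v) (h : p.IsChord s(c, d)) :
    ∃ q : G.Walk u v, q.length < p.length ∧ q.support ⊆ p.support := by
  obtain ⟨hcd, he, hc, hd⟩ := isChord_sym2Mk.mp h
  clear h
  induction p with
  | nil =>
    simp only [support_nil, List.mem_singleton] at hc hd
    exact absurd (hc.trans hd.symm) hcd.ne
  | @cons u z v hz p ih =>
    rw [edges_cons, List.mem_cons, not_or] at he
    rw [support_cons, List.mem_cons] at hc hd
    by_cases hp : c ∈ p.support ∧ d ∈ p.support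
    · obtain ⟨q, hlt, hsub⟩ := ih he.2 hp.1 hp.2
      exact ⟨cons hz q, by simpa using hlt, List.cons_subset_cons _ hsub⟩
    -- one end of the chord is `u`: jump from `u` straight to the other end
    clear ih
    wlog hcu : c = u generalizing c d
    · rw [Sym2.eq_swap] at he
      exact this hcd.symm he hd hc (by tauto) (by tauto)
    subst hcu
    have hdp : d ∈ p.support := hd.resolve_left hcd.ne.symm
    have hdz : d ≠ z := by rintro rfl; exact he.1 rfl
    exact ⟨cons hcd (p.dropUntil d hdp), by simpa using length_dropUntil_lt_length hdp hdz,
      List.cons_subset_cons _ (p.support_dropUntil_subset_support hdp)⟩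

lemma exists_isPath_isChordless_support_subset (p : G.Walk u v) :
    ∃ q : G.Walk u v, q.IsPath ∧ q.IsChordless ∧ q.support ⊆ p.support := by
  have hex : ∃ n, ∃ q : G.Walk u v, q.support ⊆ p.support ∧ q.length = n :=
    ⟨_, p, List.Subset.refl _, rfl⟩
  obtain ⟨q, hsub, hlen⟩ := Nat.find_spec hex
  have hmin : ∀ r : G.Walk u v, r.support ⊆ q.support → q.length ≤ r.length := fun r hr =>
    hlen ▸ Nat.find_min' hex ⟨r, List.Subset.trans hr hsub, rfl⟩
  refine ⟨q, ?_, ?_, hsub⟩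
  · rw [← q.bypass_eq_self_of_length_le_length_bypass (hmin _ q.support_bypass_subset_support)]
    exact q.bypass_isPath
  · intro e he
    induction e using Sym2.ind
    obtain ⟨r, hlt, hr⟩ := q.exists_length_lt_of_isChord he
    exact (hmin r hr).not_gt hlt

end Walk

variable (G) in
def IsSimplicial (v : V) : Prop := G.IsClique (G.neighborSet v)

lemma IsChordal.comap {W : Type*} {H : SimpleGraph W} (hG : G.IsChordal) (f : H ↪g G) :
    H.IsChordal := by
  intro v w hw hl
  obtain ⟨a, b, hab, ha, hb, he⟩ := hG (w.map f.toHom)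
    ((Walk.isCycle_map_iff_of_injective f.injective).mpr hw) (by rwa [Walk.length_map])
  rw [Walk.support_map, List.mem_map] at ha hb
  obtain ⟨a, ha, rfl⟩ := ha
  obtain ⟨b, hb, rfl⟩ := hb
  refine ⟨a, b, f.map_rel_iff.mp hab, ha, hb, fun h => he ?_⟩
  rw [Walk.edges_map]
  exact List.mem_map_of_mem h

lemma IsChordal.induce (hG : G.IsChordal) (s : Set V) : (G.induce s).IsChordal :=
  hG.comap (Embedding.induce s)

lemma IsChordal.deleteEdges_of_isSimplicial (hG : G.IsChordal) (hv : G.IsSimplicial v) (u : V) :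
    (G.deleteEdges {s(u, v)}).IsChordal := by
  set H := G.deleteEdges {s(u, v)}
  intro x w hw hl
  by_cases hvw : v ∈ w.support
  · set c := w.rotate v hvw
    have hc : c.IsCycle := hw.rotate hvw
    have hcl : 3 < c.length := by simpa [c] using hl
    have h1 : H.Adj v c.snd := c.adj_snd hc.not_nil
    have h2 : H.Adj c.penultimate v := c.adj_penultimate hc.not_nil
    have hG12 : G.Adj c.snd c.penultimate :=
      hv (G.deleteEdges_le _ h1) (G.deleteEdges_le _ h2.symm) hc.snd_ne_penultimate
    have hne : s(c.snd, c.penultimate) ∉ ({s(u, v)} : Set (Sym2 V)) := by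
      rw [Set.mem_singleton_iff, Sym2.eq_iff]
      grind [h1.ne, h2.ne]
    refine ⟨c.snd, c.penultimate, deleteEdges_adj.mpr ⟨hG12, hne⟩, ?_, ?_, ?_⟩
    · exact (w.mem_support_rotate_iff v hvw).mp (c.getVert_mem_support _)
    · exact (w.mem_support_rotate_iff v hvw).mp (c.getVert_mem_support _)
    · rw [← (w.rotate_edges v hvw).perm.mem_iff]
      exact hc.snd_penultimate_notMem_edges hcl
  · obtain ⟨a, b, hab, ha, hb, he⟩ := hG (w.mapLe (G.deleteEdges_le _))
      ((Walk.isCycle_mapLe _).mpr hw) (by rwa [Walk.length_mapLe])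
    rw [Walk.support_mapLe_eq_support] at ha hb
    rw [Walk.edges_mapLe_eq_edges] at he
    refine ⟨a, b, deleteEdges_adj.mpr ⟨hab, ?_⟩, ha, hb, he⟩
    rintro hab
    rw [Set.mem_singleton_iff, Sym2.eq_iff] at hab
    grind

section Separator

variable {S : Finset V} {a b x y z : V}

variable (G) in
def ReachAvoiding (S : Finset V) (a z : V) : Prop :=
  ∃ w : G.Walk a z, ∀ t ∈ w.support, t ∉ S

lemma ReachAvoiding.refl (ha : a ∉ S) : G.ReachAvoiding S a a :=
  ⟨.nil, by simpa using ha⟩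

lemma ReachAvoiding.notMem (h : G.ReachAvoiding S a z) : z ∉ S :=
  let ⟨w, hw⟩ := h; hw z w.end_mem_support

lemma ReachAvoiding.symm (h : G.ReachAvoiding S a z) : G.ReachAvoiding S z a :=
  let ⟨w, hw⟩ := h; ⟨w.reverse, by simpa using hw⟩

lemma ReachAvoiding.trans (h₁ : G.ReachAvoiding S a x) (h₂ : G.ReachAvoiding S x z) :
    G.ReachAvoiding S a z := by
  obtain ⟨w₁, hw₁⟩ := h₁
  obtain ⟨w₂, hw₂⟩ := h₂
  refine ⟨w₁.append w₂, fun t ht => ?_⟩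
  rcases Walk.mem_support_append_iff _ _ |>.mp ht with ht | ht
  exacts [hw₁ t ht, hw₂ t ht]

lemma ReachAvoiding.of_adj (h : G.ReachAvoiding S a x) (hxz : G.Adj x z) (hz : z ∉ S) :
    G.ReachAvoiding S a z :=
  h.trans ⟨hxz.toWalk, by simp [h.notMem, hz]⟩

lemma ReachAvoiding.of_walk (h : G.ReachAvoiding S a x) (w : G.Walk x z)
    (hw : ∀ t ∈ w.support, t ∉ S) : ∀ t ∈ w.support, G.ReachAvoiding S a t := by
  induction w with
  | nil => simpa using h
  | cons hxy w ih =>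
    simp only [Walk.support_cons, List.mem_cons, forall_eq_or_imp] at hw ⊢
    exact ⟨h, ih (h.of_adj hxy (hw.2 _ w.start_mem_support)) hw.2⟩

variable (G) in
def IsSeparator (S : Finset V) (a b : V) : Prop :=
  a ∉ S ∧ b ∉ S ∧ ¬G.ReachAvoiding S a b

variable (G) in
def IsMinSeparator (S : Finset V) (a b : V) : Prop :=
  G.IsSeparator S a b ∧ ∀ T, G.IsSeparator T a b → S.card ≤ T.card

lemma IsSeparator.symm (hS : G.IsSeparator S a b) : G.IsSeparator S b a :=
  ⟨hS.2.1, hS.1, fun h => hS.2.2 h.symm⟩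

lemma IsMinSeparator.symm (hS : G.IsMinSeparator S a b) : G.IsMinSeparator S b a :=
  ⟨hS.1.symm, fun T hT => hS.2 T hT.symm⟩

lemma IsSeparator.not_reachAvoiding_both (hS : G.IsSeparator S a b)
    (ha : G.ReachAvoiding S a z) (hb : G.ReachAvoiding S b z) : False :=
  hS.2.2 (ha.trans hb.symm)

lemma IsSeparator.forall_not_reachAvoiding_or_of_isClique (hS : G.IsSeparator S a b)
    {K : Set V} (hK : G.IsClique K) :
    (∀ t ∈ K, ¬G.ReachAvoiding S a t) ∨ ∀ t ∈ K, ¬G.ReachAvoiding S b t := by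
  by_contra! h
  obtain ⟨⟨t, htK, ht⟩, ⟨t', ht'K, ht'⟩⟩ := h
  have hne : t ≠ t' := by rintro rfl; exact hS.not_reachAvoiding_both ht ht'
  exact hS.not_reachAvoiding_both (ht.of_adj (hK htK ht'K hne) ht'.notMem) ht'

lemma exists_isMinSeparator [Fintype V] (hab : a ≠ b) (hadj : ¬G.Adj a b) :
    ∃ S, G.IsMinSeparator S a b := by
  have hsep : G.IsSeparator (Finset.univ \ {a, b}) a b := by
    refine ⟨by simp, by simp, ?_⟩
    rintro ⟨_ | ⟨hac, w⟩, hw⟩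
    · exact hab rfl
    · have hc := hw _ (List.mem_cons_of_mem _ w.start_mem_support)
      simp only [Finset.mem_sdiff, Finset.mem_univ, Finset.mem_insert, Finset.mem_singleton,
        true_and, not_not] at hc
      rcases hc with rfl | rfl
      exacts [hac.ne rfl, hadj hac]
  obtain ⟨S, hS, hmin⟩ := Finset.exists_min_image
    (Finset.univ.filter fun S => G.IsSeparator S a b) Finset.card ⟨_, by simpa using hsep⟩
  exact ⟨S, by simpa using hS, fun T hT => hmin T (by simpa using hT)⟩

lemma Walk.exists_adj_reachAvoiding (w : G.Walk a b) (ha : a ∉ S)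
    (hw : ∃ x ∈ S, x ∈ w.support) :
    ∃ x ∈ S, x ∈ w.support ∧ ∃ z, G.ReachAvoiding S a z ∧ G.Adj z x := by
  induction w with
  | nil =>
    obtain ⟨x, hx, hxw⟩ := hw
    rw [Walk.support_nil, List.mem_singleton] at hxw
    exact absurd (hxw ▸ hx) ha
  | @cons a c b hac w ih =>
    by_cases hc : c ∈ S
    · exact ⟨c, hc, by simp, a, .refl ha, hac⟩
    obtain ⟨x, hx, hxw, z, hz, hzx⟩ := ih hc (by
      obtain ⟨x, hx, hxw⟩ := hw
      rw [Walk.support_cons, List.mem_cons] at hxw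
      exact ⟨x, hx, hxw.resolve_left (by rintro rfl; exact ha hx)⟩)
    exact ⟨x, hx, by simp [hxw], z, (ReachAvoiding.refl ha).of_adj hac hc |>.trans hz, hzx⟩

lemma IsMinSeparator.exists_adj_reachAvoiding (hS : G.IsMinSeparator S a b) (hx : x ∈ S) :
    ∃ z, G.ReachAvoiding S a z ∧ G.Adj z x := by
  have hnsep : ¬G.IsSeparator (S.erase x) a b := fun h =>
    (hS.2 _ h).not_gt (Finset.card_erase_lt_of_mem hx)
  have ha : a ∉ S.erase x := fun h => hS.1.1 (Finset.mem_of_mem_erase h)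
  have hb : b ∉ S.erase x := fun h => hS.1.2.1 (Finset.mem_of_mem_erase h)
  obtain ⟨w, hw⟩ : G.ReachAvoiding (S.erase x) a b := by
    by_contra h
    exact hnsep ⟨ha, hb, h⟩
  have hmeet : ∃ x ∈ S, x ∈ w.support := by
    by_contra! h
    exact hS.1.2.2 ⟨w, fun t ht htS => h t htS ht⟩
  obtain ⟨x', hx', hx'w, z, hz, hzx'⟩ := w.exists_adj_reachAvoiding hS.1.1 hmeet
  obtain rfl : x' = x := by
    by_contra hne
    exact hw x' hx'w (Finset.mem_erase.mpr ⟨hne, hx'⟩)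
  exact ⟨z, hz, hzx'⟩

lemma IsMinSeparator.exists_isPath_isChordless (hS : G.IsMinSeparator S a b) (hx : x ∈ S)
    (hy : y ∈ S) : ∃ P : G.Walk x y, P.IsPath ∧ P.IsChordless ∧
      ∀ t ∈ P.support, t = x ∨ t = y ∨ G.ReachAvoiding S a t := by
  obtain ⟨zx, hzx, hxzx⟩ := hS.exists_adj_reachAvoiding hx
  obtain ⟨zy, hzy, hyzy⟩ := hS.exists_adj_reachAvoiding hy
  obtain ⟨w, hw⟩ := hzx.symm.trans hzy
  have hside := hzx.of_walk w hw
  obtain ⟨P, hP, hPc, hsub⟩ :=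
    ((w.concat hyzy).cons hxzx.symm).exists_isPath_isChordless_support_subset
  refine ⟨P, hP, hPc, fun t ht => ?_⟩
  have := hsub ht
  simp only [Walk.support_cons, Walk.support_concat, List.mem_cons, List.mem_append] at this
  grind

lemma IsChordal.isClique_of_isMinSeparator (hG : G.IsChordal) (hS : G.IsMinSeparator S a b) :
    G.IsClique (S : Set V) := by
  intro x hx y hy hxy
  by_contra hadj
  obtain ⟨P, hP, hPc, hPa⟩ := hS.exists_isPath_isChordless hx hy
  obtain ⟨Q, hQ, hQc, hQb⟩ := hS.symm.exists_isPath_isChordless hx hy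
  have hlen : ∀ R : G.Walk x y, 2 ≤ R.length := by
    intro R
    by_contra! h
    interval_cases hR : R.length
    · exact hxy (Walk.eq_of_length_eq_zero hR)
    · exact hadj (Walk.adj_of_length_eq_one hR)
  have hPside : ∀ t ∈ P.support, t ∉ Q.support → G.ReachAvoiding S a t := fun t ht htQ =>
    ((hPa t ht).resolve_left (by rintro rfl; exact htQ Q.start_mem_support)).resolve_left
      (by rintro rfl; exact htQ Q.end_mem_support)
  have hQside : ∀ t ∈ Q.support, t ∉ P.support → G.ReachAvoiding S b t := fun t ht htP =>
    ((hQb t ht).resolve_left (by rintro rfl; exact htP P.start_mem_support)).resolve_left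
      (by rintro rfl; exact htP P.end_mem_support)
  have hcross : ∀ c ∈ P.support, ∀ d ∈ Q.support, c ∉ Q.support → d ∉ P.support →
      ¬G.Adj c d := fun c hc d hd hcQ hdP hcd =>
    hS.1.not_reachAvoiding_both ((hPside c hc hcQ).of_adj hcd (hQside d hd hdP).notMem)
      (hQside d hd hdP)
  have hdisj : P.support.tail.Disjoint Q.reverse.support.tail := by
    intro t htP htQ
    have hxP : x ∉ P.support.tail :=
      (List.nodup_cons.mp (P.cons_tail_support ▸ hP.support_nodup)).1
    have hyQ : y ∉ Q.reverse.support.tail :=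
      (List.nodup_cons.mp (Q.reverse.cons_tail_support ▸ hQ.reverse.support_nodup)).1
    have htP' : t ∈ P.support := P.cons_tail_support ▸ List.mem_cons_of_mem _ htP
    have htQ' : t ∈ Q.support := by
      simpa using
        (Q.reverse.cons_tail_support ▸ List.mem_cons_of_mem _ htQ : t ∈ Q.reverse.support)
    have htx : t ≠ x := ne_of_mem_of_not_mem htP hxP
    have hty : t ≠ y := ne_of_mem_of_not_mem htQ hyQ
    exact hS.1.not_reachAvoiding_both (by simpa [htx, hty] using hPa t htP')
      (by simpa [htx, hty] using hQb t htQ')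
  have hC := hP.isCycle_append hQ.reverse hdisj (Or.inl (hlen P))
  obtain ⟨c, d, hcd, hc, hd, he⟩ := hG _ hC (by
    simp only [Walk.length_append, Walk.length_reverse]
    linarith [hlen P, hlen Q])
  simp only [Walk.mem_support_append_iff, Walk.support_reverse, List.mem_reverse] at hc hd
  simp only [Walk.edges_append, Walk.edges_reverse, List.mem_append, List.mem_reverse,
    not_or] at he
  -- a chord within `P` or `Q` contradicts chordlessness, and no edge crosses between the sides
  have hPP := hPc.mem_edges (u' := c) (v' := d)
  have hQQ := hQc.mem_edges (u' := c) (v' := d)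
  have hPQ := hcross c
  have hQP := hcross d
  have hdc := hcd.symm
  tauto

end Separator

lemma IsSimplicial.of_induce {s : Set V} {v : s} (hv : (G.induce s).IsSimplicial v)
    (hN : G.neighborSet v ⊆ s) : G.IsSimplicial v := fun x hx y hy hxy =>
  hv (show (G.induce s).Adj v ⟨x, hN hx⟩ from hx)
    (show (G.induce s).Adj v ⟨y, hN hy⟩ from hy) (by simpa using hxy)

theorem IsChordal.exists_isSimplicial_notMem [Finite V] (hG : G.IsChordal) {K : Set V}
    (hK : G.IsClique K) (hKV : ∃ v, v ∉ K) : ∃ v ∉ K, G.IsSimplicial v := by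
  have := Fintype.ofFinite V
  induction hn : Fintype.card V using Nat.strong_induction_on generalizing V with
  | _ n ih =>
  by_cases hcomplete : G.IsClique Set.univ
  · obtain ⟨v, hv⟩ := hKV
    exact ⟨v, hv, hcomplete.subset (Set.subset_univ _)⟩
  obtain ⟨a, b, hab, hadj⟩ : ∃ a b, a ≠ b ∧ ¬G.Adj a b := by
    simpa [IsClique, Set.Pairwise] using hcomplete
  obtain ⟨S, hS⟩ := exists_isMinSeparator hab hadj
  wlog hKa : ∀ t ∈ K, ¬G.ReachAvoiding S a t generalizing a b S
  · exact this b a hab.symm (fun h => hadj h.symm) S hS.symm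
      ((hS.1.forall_not_reachAvoiding_or_of_isClique hK).resolve_left hKa)
  -- a simplicial vertex of `G[U]` outside the clique `S` lies on the `a`-side, so all of its
  -- neighbours in `G` are in `U`
  set U : Set V := {z | G.ReachAvoiding S a z} ∪ S
  have hU : Fintype.card U < n :=
    hn ▸ Fintype.card_subtype_lt (x := b) (by rintro (h | h); exacts [hS.1.2.2 h, hS.1.2.1 h])
  obtain ⟨⟨u, huU⟩, huS, hu⟩ := ih _ hU (hG.induce U) (K := Subtype.val ⁻¹' S)
    (isClique_induce_iff.mpr ((hG.isClique_of_isMinSeparator hS).subset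
      (Set.image_preimage_subset _ _))) ⟨⟨a, Or.inl (.refl hS.1.1)⟩, hS.1.1⟩ _ rfl
  have hua : G.ReachAvoiding S a u := huU.resolve_right huS
  refine ⟨u, fun huK => hKa u huK hua, hu.of_induce fun z hz => ?_⟩
  by_cases hzS : z ∈ S
  exacts [Or.inr hzS, Or.inl (hua.of_adj hz hzS)]

section Degree

variable [Fintype V]

lemma degree_le_degree_deleteEdges_add_one (u v t : V) :
    G.degree t ≤ (G.deleteEdges {s(u, v)}).degree t + 1 := by
  have hsub : G.neighborFinset t ⊆
      insert (if t = u then v else u) ((G.deleteEdges {s(u, v)}).neighborFinset t) := by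
    intro x hx
    rw [mem_neighborFinset] at hx
    rw [Finset.mem_insert, mem_neighborFinset, deleteEdges_adj, Set.mem_singleton_iff,
      Sym2.eq_iff]
    grind [hx.ne]
  simpa using (Finset.card_le_card hsub).trans (Finset.card_insert_le _ _)

theorem IsChordal.exists_le_isChordal_minDegree_eq [Nonempty V] (hG : G.IsChordal) {p : ℕ}
    (hp : p ≤ G.minDegree) : ∃ H ≤ G, H.IsChordal ∧ H.minDegree = p := by
  induction G using WellFoundedLT.induction with
  | _ G ih =>
  rcases hp.eq_or_lt with hp | hp
  · exact ⟨G, le_rfl, hG, hp.symm⟩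
  obtain ⟨v, -, hv⟩ := hG.exists_isSimplicial_notMem (K := ∅) (by simp)
    ⟨Classical.arbitrary V, id⟩
  obtain ⟨u, hu⟩ := (G.degree_pos_iff_exists_adj v).mp
    ((Nat.zero_le _).trans_lt (hp.trans_le (G.minDegree_le_degree v)))
  have hlt : G.deleteEdges {s(u, v)} < G := (G.deleteEdges_le _).lt_of_ne fun h => by
    have := h ▸ hu.symm
    simp at this
  have hp' : p ≤ (G.deleteEdges {s(u, v)}).minDegree :=
    le_minDegree_of_forall_le_degree _ _ fun t => by
      have := degree_le_degree_deleteEdges_add_one (G := G) u v t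
      have := G.minDegree_le_degree t
      omega
  -- `ih` carries the classical `DecidableRel` instance, `hp'` the one of `deleteEdges`
  obtain ⟨H, hH, hHc, hHp⟩ := ih _ hlt (hG.deleteEdges_of_isSimplicial hv u) (by convert hp')
  exact ⟨H, hH.trans hlt.le, hHc, hHp⟩

end Degree

end SimpleGraph

/-- A chordal graph of minimum degree `k` contains, for every `p < k`, a chordal spanning
subgraph of minimum degree exactly `p`. -/
theorem stmt_2 {V : Type*} [Fintype V] (G : SimpleGraph V) (k p : ℕ)
    (hchordal : G.IsChordal) (hmin : G.minDegree = k) (hp : p < k) :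
    ∃ H : SimpleGraph V, H ≤ G ∧ H.IsChordal ∧ H.minDegree = p := by
  have : Nonempty V := by
    by_contra h
    have : IsEmpty V := not_nonempty_iff.mp h
    have := G.minDegree_of_subsingleton
    omega
  obtain ⟨H, hH, hHc, hHp⟩ := hchordal.exists_le_isChordal_minDegree_eq (hmin ▸ hp.le)
  exact ⟨H, hH, hHc, hHp⟩
end

section
/- Let G be a chordal graph that is k-regular, i.e., every vertex of G has degree k. Then every connected component of G is a complete graph on k+1 vertices. -/
open scoped Classical

/-!
In a `k`-regular chordal graph every chordless path has length at most one, so adjacency is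
transitive on distinct vertices and every component is the closed neighbourhood of any of its
vertices.

A chordless path `v v₁ v₂ …` of length at least two extends at `v`: `v₂` is a neighbour of `v₁`
outside `N[v]`, so by regularity some neighbour `u` of `v` lies outside `N[v₁]`. If `u` saw a
further vertex of the path, the first one `x` after `v` would close a chordless cycle
`u v v₁ … x u` of length at least four. Iterating gives arbitrarily long paths in a finite graph.
-/

namespace SimpleGraph

variable {V : Type*} {G : SimpleGraph V} {u v w : V}

namespace Walk

theorem IsChordless.cons {p : G.Walk v w} (hp : p.IsChordless) (h : G.Adj u v)
    (hu : ∀ y ∈ p.support, G.Adj u y → y = v) : (cons h p).IsChordless := by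
  rw [isChordless_iff_forall_mem_edges]
  simp only [support_cons, edges_cons, List.mem_cons]
  rintro a b (rfl | ha) (rfl | hb) hab
  · exact absurd rfl hab.ne
  · exact .inl (by rw [hu b hb hab])
  · exact .inl (by rw [hu a ha hab.symm, Sym2.eq_swap])
  · exact .inr (hp.mem_edges ha hb hab)

theorem IsChordless.cons_concat {p : G.Walk v w} (hp : p.IsChordless) (hv : G.Adj u v)
    (hw : G.Adj w u) (hu : ∀ y ∈ p.support, G.Adj u y → y = v ∨ y = w) :
    ((p.concat hw).cons hv).IsChordless := by
  have hsupp : ∀ y ∈ ((p.concat hw).cons hv).support, y = u ∨ y ∈ p.support := by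
    simp only [support_cons, support_concat, List.mem_cons, List.mem_append, List.not_mem_nil,
      or_false, forall_eq_or_imp, true_or, true_and]
    tauto
  have hedges : ∀ y ∈ p.support, G.Adj u y → s(u, y) ∈ ((p.concat hw).cons hv).edges := by
    intro y hy huy
    rcases hu y hy huy with rfl | rfl <;> simp [edges_concat, Sym2.eq_swap]
  rw [isChordless_iff_forall_mem_edges]
  intro a b ha hb hab
  rcases hsupp a ha with rfl | ha' <;> rcases hsupp b hb with rfl | hb'
  · exact absurd rfl hab.ne
  · exact hedges b hb' hab
  · exact Sym2.eq_swap ▸ hedges a ha' hab.symm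
  · simp [edges_concat, hp.mem_edges ha' hb' hab]

theorem IsChordless.of_append_left {p : G.Walk u v} {q : G.Walk v w}
    (hpq : (p.append q).IsPath) (h : (p.append q).IsChordless) : p.IsChordless := by
  rw [isChordless_iff_forall_mem_edges]
  intro a b ha hb hab
  have hmem := h.mem_edges (p.support_subset_support_append_left q ha)
    (p.support_subset_support_append_left q hb) hab
  rw [edges_append, List.mem_append] at hmem
  refine hmem.resolve_right fun hq => hab.ne ?_
  have eq_of_mem {x : V} (hxp : x ∈ p.support) (hxq : x ∈ q.support) : x = v := by
    by_contra hxv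
    exact hpq.ne_of_mem_support_of_append hxv hxp hxq rfl
  rw [eq_of_mem ha (q.fst_mem_support_of_mem_edges hq),
    eq_of_mem hb (q.snd_mem_support_of_mem_edges hq)]

theorem exists_eq_append_first_of_mem_support (S : V → Prop) {p : G.Walk u v} {y : V}
    (hy : y ∈ p.support) (hS : S y) : ∃ (x : V) (q : G.Walk u x) (r : G.Walk x v),
      p = q.append r ∧ S x ∧ ∀ z ∈ q.support, S z → z = x := by
  induction p with
  | nil =>
    rw [support_nil, List.mem_singleton] at hy
    subst hy
    exact ⟨_, nil, nil, rfl, hS, by simp⟩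
  | @cons a b c h p ih =>
    by_cases ha : S a
    · exact ⟨a, nil, cons h p, rfl, ha, by simp⟩
    · rw [support_cons, List.mem_cons] at hy
      rcases hy with rfl | hy
      · exact absurd hS ha
      obtain ⟨x, q, r, rfl, hx, hq⟩ := ih hy
      refine ⟨x, cons h q, r, rfl, hx, ?_⟩
      simp only [support_cons, List.mem_cons, forall_eq_or_imp]
      exact ⟨fun h' => absurd h' ha, hq⟩

end Walk

open Walk

theorem IsChordal.length_le_three (hG : G.IsChordal) {c : G.Walk v v} (hc : c.IsCycle)
    (hcl : c.IsChordless) : c.length ≤ 3 := by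
  by_contra! hlen
  obtain ⟨a, b, hab, ha, hb, he⟩ := hG c hc hlen
  exact he (hcl.mem_edges ha hb hab)

theorem IsChordal.length_le_one_of_adj_endpoints (hG : G.IsChordal) {p : G.Walk v w}
    (hp : p.IsPath) (hpc : p.IsChordless) (hu : u ∉ p.support) (hv : G.Adj u v) (hw : G.Adj w u)
    (hnbr : ∀ y ∈ p.support, G.Adj u y → y = v ∨ y = w) : p.length ≤ 1 := by
  by_contra! hlen
  have hvw : v ≠ w := by
    rintro rfl
    simp [(isPath_iff_nil.mp hp).length_eq_zero] at hlen
  have hcyc : ((p.concat hw).cons hv).IsCycle := by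
    refine (cons_isCycle_iff _ hv).mpr ⟨hp.concat hu hw, fun he => ?_⟩
    rw [edges_concat, List.concat_eq_append, List.mem_append, List.mem_singleton] at he
    rcases he with he | he
    · exact hu (p.fst_mem_support_of_mem_edges he)
    · rcases Sym2.eq_iff.mp he with ⟨rfl, -⟩ | ⟨-, rfl⟩
      · exact hu p.end_mem_support
      · exact hvw rfl
  have := hG.length_le_three hcyc (hpc.cons_concat hv hw hnbr)
  rw [length_cons, length_concat] at this
  omega

theorem IsChordal.eq_of_adj_of_mem_support (hG : G.IsChordal) {v₁ : V} {h : G.Adj v v₁}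
    {p : G.Walk v₁ w} (hp : (p.cons h).IsPath) (hpc : (p.cons h).IsChordless)
    (hu : u ∉ (p.cons h).support) (huv : G.Adj u v) (huv₁ : ¬ G.Adj u v₁) {y : V}
    (hy : y ∈ (p.cons h).support) (huy : G.Adj u y) : y = v := by
  rw [support_cons, List.mem_cons] at hy
  refine hy.resolve_right fun hy => ?_
  obtain ⟨x, q, r, rfl, hux, hq⟩ := p.exists_eq_append_first_of_mem_support (G.Adj u) hy huy
  rw [← cons_append] at hp hpc hu
  have hlen := hG.length_le_one_of_adj_endpoints hp.of_append_left (hpc.of_append_left hp)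
    (fun hu' => hu ((q.cons h).support_subset_support_append_left r hu')) huv hux.symm ?_
  · have : q.length = 0 := by simpa using hlen
    exact huv₁ (eq_of_length_eq_zero this ▸ hux)
  · intro z hz huz
    rw [support_cons, List.mem_cons] at hz
    exact hz.imp id (hq z · huz)

theorem IsRegularOfDegree.exists_adj_ne_not_adj [G.LocallyFinite] {k : ℕ}
    (hreg : G.IsRegularOfDegree k) {v₁ v₂ : V} (h₁ : G.Adj v v₁) (h₂ : G.Adj v₁ v₂)
    (hv₂ : ¬ G.Adj v v₂) (hvv₂ : v ≠ v₂) :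
    ∃ u, G.Adj v u ∧ u ≠ v₁ ∧ ¬ G.Adj v₁ u := by
  classical
  have hcard : (G.neighborFinset v₁ \ G.neighborFinset v).card =
      (G.neighborFinset v \ G.neighborFinset v₁).card :=
    Finset.card_sdiff_comm (by simp only [card_neighborFinset_eq_degree, hreg v, hreg v₁])
  have hlt : 1 < (G.neighborFinset v₁ \ G.neighborFinset v).card :=
    Finset.one_lt_card.mpr ⟨v, by simp [h₁.symm], v₂, by simp [h₂, hv₂], hvv₂⟩
  obtain ⟨u, hu, huv₁⟩ := Finset.exists_mem_ne (hcard ▸ hlt) v₁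
  simp only [Finset.mem_sdiff, mem_neighborFinset] at hu
  exact ⟨u, hu.1, huv₁, hu.2⟩

theorem IsChordal.exists_cons_isPath_isChordless [G.LocallyFinite] {k : ℕ} (hG : G.IsChordal)
    (hreg : G.IsRegularOfDegree k) {p : G.Walk v w} (hp : p.IsPath) (hpc : p.IsChordless)
    (hlen : 2 ≤ p.length) :
    ∃ u, ∃ h : G.Adj u v, (p.cons h).IsPath ∧ (p.cons h).IsChordless := by
  cases p with
  | nil => simp at hlen
  | @cons _ v₁ _ h₁ p =>
  cases p with
  | nil => simp at hlen
  | @cons _ v₂ _ h₂ p =>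
  have hvv₂ : v ≠ v₂ := by
    rintro rfl
    exact (cons_isPath_iff _ _).mp hp |>.2 (by simp)
  have hv₂ : ¬ G.Adj v v₂ := fun h =>
    h₂.ne (hp.eq_snd_of_mem_edges (hpc.mem_edges (by simp) (by simp) h)).symm
  obtain ⟨u, hvu, huv₁, hv₁u⟩ := hreg.exists_adj_ne_not_adj h₁ h₂ hv₂ hvv₂
  have hu : u ∉ ((p.cons h₂).cons h₁).support := fun hu =>
    huv₁ (hp.eq_snd_of_mem_edges (hpc.mem_edges (by simp) hu hvu))
  exact ⟨u, hvu.symm, hp.cons hu, hpc.cons hvu.symm fun y hy huy =>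
    hG.eq_of_adj_of_mem_support hp hpc hu hvu.symm (fun h => hv₁u h.symm) hy huy⟩

theorem IsChordal.length_le_one [Finite V] [G.LocallyFinite] {k : ℕ} (hG : G.IsChordal)
    (hreg : G.IsRegularOfDegree k) {p : G.Walk v w} (hp : p.IsPath) (hpc : p.IsChordless) :
    p.length ≤ 1 := by
  by_contra! hlen
  have grow (n : ℕ) : ∃ (a : V) (q : G.Walk a w),
      q.IsPath ∧ q.IsChordless ∧ p.length + n ≤ q.length := by
    induction n with
    | zero => exact ⟨v, p, hp, hpc, le_rfl⟩
    | succ n ih =>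
      obtain ⟨a, q, hq, hqc, hlenq⟩ := ih
      obtain ⟨u, h, hq', hqc'⟩ := hG.exists_cons_isPath_isChordless hreg hq hqc (by omega)
      exact ⟨u, q.cons h, hq', hqc', by rw [length_cons]; omega⟩
  have := Fintype.ofFinite V
  obtain ⟨a, q, hq, -, hlenq⟩ := grow (Fintype.card V)
  have := hq.length_lt
  omega

theorem IsChordal.adj_of_adj_of_adj [Finite V] [G.LocallyFinite] {k : ℕ} (hG : G.IsChordal)
    (hreg : G.IsRegularOfDegree k) {x y z : V} (hxy : G.Adj x y) (hyz : G.Adj y z) (hxz : x ≠ z) :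
    G.Adj x z := by
  by_contra hnxz
  have hp : (hyz.toWalk.cons hxy).IsPath := by simp [hxy.ne, hyz.ne, hxz]
  have hpc : (hyz.toWalk.cons hxy).IsChordless := hyz.isChordless_toWalk.cons hxy fun t ht hxt => by
    simp only [Adj.support_toWalk, List.mem_cons, List.not_mem_nil, or_false] at ht
    rcases ht with rfl | rfl
    · rfl
    · exact absurd hxt hnxz
  have := hG.length_le_one hreg hp hpc
  simp at this

theorem adj_of_reachable (htrans : ∀ x y z, G.Adj x y → G.Adj y z → x ≠ z → G.Adj x z)
    {x y : V} (hxy : G.Reachable x y) (hne : x ≠ y) : G.Adj x y := by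
  obtain ⟨p⟩ := hxy
  induction p with
  | nil => exact absurd rfl hne
  | @cons a b c h p ih =>
    by_cases hbc : b = c
    · exact hbc ▸ h
    · exact htrans a b c h (ih hbc) hne

end SimpleGraph

/-- If `G` is a `k`-regular chordal graph, then every connected component of `G` is a
complete graph on `k + 1` vertices (i.e. each component has `k + 1` vertices and any two
distinct vertices in a common component are adjacent). -/
theorem stmt_10 {V : Type*} [Fintype V] (G : SimpleGraph V) (k : ℕ)
    (hchordal : G.IsChordal) (hreg : G.IsRegularOfDegree k) :
    ∀ c : G.ConnectedComponent, c.supp.ncard = k + 1 ∧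
      ∀ x ∈ c.supp, ∀ y ∈ c.supp, x ≠ y → G.Adj x y := by
  have hadj {x y : V} (hxy : G.Reachable x y) (hne : x ≠ y) : G.Adj x y :=
    SimpleGraph.adj_of_reachable (fun _ _ _ => hchordal.adj_of_adj_of_adj hreg) hxy hne
  refine SimpleGraph.ConnectedComponent.ind fun v => ⟨?_, fun x hx y hy hxy =>
    hadj (SimpleGraph.ConnectedComponent.exact (hx.trans hy.symm)) hxy⟩
  have hsupp : (G.connectedComponentMk v).supp = insert v (G.neighborSet v) := by
    ext x
    simp only [SimpleGraph.ConnectedComponent.mem_supp_iff, SimpleGraph.ConnectedComponent.eq,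
      Set.mem_insert_iff, SimpleGraph.mem_neighborSet]
    refine ⟨fun h => ?_, ?_⟩
    · by_cases hxv : x = v
      · exact .inl hxv
      · exact .inr (hadj h hxv).symm
    · rintro (rfl | h)
      · rfl
      · exact h.symm.reachable
  rw [hsupp, Set.ncard_insert_of_notMem G.notMem_neighborSet_self,
    ← SimpleGraph.coe_neighborFinset, Set.ncard_coe_finset,
    SimpleGraph.card_neighborFinset_eq_degree, hreg v]
end
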